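/- A probability measure μ on ℝ satisfies the recursive distributional equation X =_d 1{V ≤ U}·U·X + 1{V > U}·(1−U)·X′ + U·(1−U) (where U, V, X, X′ are independent, U and V are uniformly distributed on [0,1], and X, X′ are both distributed according to μ) if and only if μ satisfies the recursive distributional equation X =_d √U·X + √U·(1−√U) (where X and U are independent, X ∼ μ, and U is uniformly distributed on [0,1]). -/

import Mathlib

open MeasureTheory

noncomputable section

/-- The uniform distribution on `[0,1]`. -/
def unif : Measure ℝ := volume.restrict (Set.Icc 0 1)

/-- The map `(x, u) ↦ √u·x + √u·(1 − √u)`. -/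
def rdeMap (q : ℝ × ℝ) : ℝ :=
  Real.sqrt q.2 * q.1 + Real.sqrt q.2 * (1 - Real.sqrt q.2)

/-- The map `((x, x'), (u, v)) ↦ 1{v ≤ u}·u·x + 1{v > u}·(1−u)·x' + u·(1−u)`. -/
def rdeMap2 (q : (ℝ × ℝ) × ℝ × ℝ) : ℝ :=
  (if q.2.2 ≤ q.2.1 then q.2.1 * q.1.1 else (1 - q.2.1) * q.1.2) + q.2.1 * (1 - q.2.1)

/-!
Both right-hand sides have the same law for every probability measure `μ`, so the two fixed-point
equations coincide. Test against `F ≥ 0`. In the first equation, integrating out `V` selects the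
branch `x` with weight `u` and the branch `x'` with weight `1 - u`; after `u ↦ 1 - u` in the second
branch both become `∫₀¹ F(u x + u(1 - u)) u du`. In the second equation `√U` has density `2s` on
`[0, 1]`, which gives twice the same kernel.
-/

open Set
open scoped ENNReal

instance isProbabilityMeasure_unif : IsProbabilityMeasure unif :=
  ⟨by simp [unif, Real.volume_Icc]⟩

lemma measurable_rdeMap : Measurable rdeMap := by
  unfold rdeMap
  fun_prop

lemma measurable_rdeMap2 : Measurable rdeMap2 := by
  unfold rdeMap2
  refine Measurable.add ?_ (by fun_prop)
  exact Measurable.ite (measurableSet_le (by fun_prop) (by fun_prop)) (by fun_prop) (by fun_prop)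

lemma lintegral_unif_ite_le {u : ℝ} (h0 : 0 ≤ u) (h1 : u ≤ 1) (A B : ℝ≥0∞) :
    ∫⁻ v, (if v ≤ u then A else B) ∂unif = A * ENNReal.ofReal u + B * ENNReal.ofReal (1 - u) := by
  have hIic : Iic u ∩ Icc 0 1 = Icc 0 u := by
    ext x; simp only [mem_inter_iff, mem_Iic, mem_Icc]; grind
  have hIoi : Ioi u ∩ Icc 0 1 = Ioc u 1 := by
    ext x; simp only [mem_inter_iff, mem_Ioi, mem_Icc, mem_Ioc]; grind
  change ∫⁻ v, (Iic u).piecewise (fun _ => A) (fun _ => B) v ∂unif = _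
  rw [lintegral_piecewise measurableSet_Iic, setLIntegral_const, setLIntegral_const, compl_Iic,
    unif, Measure.restrict_apply measurableSet_Iic, Measure.restrict_apply measurableSet_Ioi,
    hIic, hIoi, Real.volume_Icc, Real.volume_Ioc, sub_zero]

lemma lintegral_unif_comp_one_sub (G : ℝ → ℝ≥0∞) :
    ∫⁻ u, G (1 - u) ∂unif = ∫⁻ u, G u ∂unif := by
  have := (Measure.measurePreserving_sub_left volume (1 : ℝ)).setLIntegral_comp_preimage_emb
    (MeasurableEquiv.subLeft (1 : ℝ)).measurableEmbedding G (Icc 0 1)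
  simpa [unif] using this

lemma lintegral_unif_comp_sqrt (G : ℝ → ℝ≥0∞) :
    ∫⁻ u, G (Real.sqrt u) ∂unif = ∫⁻ s, ENNReal.ofReal (2 * s) * G s ∂unif := by
  have hmono : StrictMonoOn (fun s : ℝ => s ^ 2) (Icc 0 1) :=
    (pow_left_strictMonoOn₀ two_ne_zero).mono fun s hs => hs.1
  have himage : (fun s : ℝ => s ^ 2) '' Icc 0 1 = Icc 0 1 := by
    simpa using (continuous_pow 2).continuousOn.image_Icc_of_monotoneOn zero_le_one
      hmono.monotoneOn
  have := lintegral_image_eq_lintegral_abs_deriv_mul measurableSet_Icc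
    (fun s _ => (hasDerivAt_pow 2 s).hasDerivWithinAt) hmono.injOn (fun u => G (Real.sqrt u))
  rw [himage] at this
  rw [unif, this]
  refine setLIntegral_congr_fun measurableSet_Icc fun s hs => ?_
  simp [abs_of_nonneg hs.1, Real.sqrt_sq hs.1]

def rdeKernel (F : ℝ → ℝ≥0∞) (x : ℝ) : ℝ≥0∞ :=
  ∫⁻ u, F (u * x + u * (1 - u)) * ENNReal.ofReal u ∂unif

lemma measurable_rdeKernel {F : ℝ → ℝ≥0∞} (hF : Measurable F) : Measurable (rdeKernel F) :=
  Measurable.lintegral_prod_right'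
    (f := fun p : ℝ × ℝ => F (p.2 * p.1 + p.2 * (1 - p.2)) * ENNReal.ofReal p.2)
    ((hF.comp (by fun_prop)).mul (by fun_prop))

lemma lintegral_rdeMap_section (F : ℝ → ℝ≥0∞) (x : ℝ) :
    ∫⁻ u, F (rdeMap (x, u)) ∂unif = 2 * rdeKernel F x := by
  calc ∫⁻ u, F (rdeMap (x, u)) ∂unif
      = ∫⁻ s, ENNReal.ofReal (2 * s) * F (s * x + s * (1 - s)) ∂unif :=
        lintegral_unif_comp_sqrt (fun s => F (s * x + s * (1 - s)))
    _ = ∫⁻ s, 2 * (F (s * x + s * (1 - s)) * ENNReal.ofReal s) ∂unif := by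
        refine lintegral_congr fun s => ?_
        rw [ENNReal.ofReal_mul zero_le_two, ENNReal.ofReal_ofNat]
        ring
    _ = 2 * rdeKernel F x := lintegral_const_mul' 2 _ ENNReal.ofNat_ne_top

lemma lintegral_rdeMap2_section {F : ℝ → ℝ≥0∞} (hF : Measurable F) (x x' : ℝ) :
    ∫⁻ w, F (rdeMap2 ((x, x'), w)) ∂(unif.prod unif) = rdeKernel F x + rdeKernel F x' := by
  have hmeas : Measurable fun w : ℝ × ℝ => F (rdeMap2 ((x, x'), w)) :=
    hF.comp (measurable_rdeMap2.comp (by fun_prop))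
  have hbranch (u : ℝ) : ∫⁻ v, F (rdeMap2 ((x, x'), (u, v))) ∂unif =
      ∫⁻ v, (if v ≤ u then F (u * x + u * (1 - u)) else F ((1 - u) * x' + u * (1 - u))) ∂unif := by
    refine lintegral_congr fun v => ?_
    simp only [rdeMap2]
    split_ifs <;> rfl
  have hreflect : rdeKernel F x' =
      ∫⁻ u, F ((1 - u) * x' + u * (1 - u)) * ENNReal.ofReal (1 - u) ∂unif := by
    rw [rdeKernel, ← lintegral_unif_comp_one_sub]
    refine lintegral_congr fun u => ?_
    rw [sub_sub_cancel, mul_comm (1 - u) u]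
  rw [lintegral_prod _ hmeas.aemeasurable, hreflect, rdeKernel,
    ← lintegral_add_left (by fun_prop)]
  simp only [hbranch]
  refine setLIntegral_congr_fun measurableSet_Icc fun u hu => ?_
  exact lintegral_unif_ite_le hu.1 hu.2 _ _

lemma lintegral_comp_rdeMap (μ : Measure ℝ) [SFinite μ] {F : ℝ → ℝ≥0∞} (hF : Measurable F) :
    ∫⁻ q, F (rdeMap q) ∂(μ.prod unif) = 2 * ∫⁻ x, rdeKernel F x ∂μ := by
  rw [lintegral_prod (fun q => F (rdeMap q)) (hF.comp measurable_rdeMap).aemeasurable]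
  simp only [lintegral_rdeMap_section]
  exact lintegral_const_mul' 2 _ ENNReal.ofNat_ne_top

lemma lintegral_comp_rdeMap2 (μ : Measure ℝ) [IsProbabilityMeasure μ] {F : ℝ → ℝ≥0∞}
    (hF : Measurable F) :
    ∫⁻ q, F (rdeMap2 q) ∂((μ.prod μ).prod (unif.prod unif)) = 2 * ∫⁻ x, rdeKernel F x ∂μ := by
  have hK := measurable_rdeKernel hF
  rw [lintegral_prod (fun q => F (rdeMap2 q)) (hF.comp measurable_rdeMap2).aemeasurable]
  simp only [lintegral_rdeMap2_section hF]
  rw [lintegral_add_left (f := fun p : ℝ × ℝ => rdeKernel F p.1) (hK.comp measurable_fst),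
    measurePreserving_fst.lintegral_comp hK, measurePreserving_snd.lintegral_comp hK, two_mul]

lemma map_rdeMap2_eq_map_rdeMap (μ : Measure ℝ) [IsProbabilityMeasure μ] :
    Measure.map rdeMap2 ((μ.prod μ).prod (unif.prod unif)) = Measure.map rdeMap (μ.prod unif) :=
  Measure.ext_of_lintegral _ fun F hF => by
    rw [lintegral_map hF measurable_rdeMap2, lintegral_map hF measurable_rdeMap,
      lintegral_comp_rdeMap2 μ hF, lintegral_comp_rdeMap μ hF]

/-- A probability measure `μ` on `ℝ` satisfies the recursive distributional equation
`X =_d 1{V ≤ U}·U·X + 1{V > U}·(1−U)·X′ + U·(1−U)` (with `U, V, X, X′` independent, `U, V`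
uniform on `[0,1]` and `X, X′ ∼ μ`) if and only if it satisfies the recursive distributional
equation `X =_d √U·X + √U·(1−√U)` (with `X, U` independent, `X ∼ μ`, `U` uniform). -/
theorem rde_equivalence (μ : Measure ℝ) (hμ : IsProbabilityMeasure μ) :
    Measure.map rdeMap2 ((μ.prod μ).prod (unif.prod unif)) = μ ↔
      Measure.map rdeMap (μ.prod unif) = μ := by
  rw [map_rdeMap2_eq_map_rdeMap]
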